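/- Let H be an m×m real symmetric positive definite matrix, let m ≤ n, and suppose W⁰ ∈ R^{m×n} has orthonormal rows, i.e. W⁰ (W⁰)ᵀ = I_m (an element of the Stiefel manifold). Then the whitened gradient descent step with optimal step size η* = ‖H W⁰‖₁ / Tr(H) reaches the global minimizer of L(W) = (1/2)·Tr(Wᵀ H W) in one step: W¹ = W⁰ − η* (H W⁰ (H W⁰)ᵀ)^{-1/2} (H W⁰) = 0 = W*. -/

import Mathlib

open Matrix

open Classical in
/-- The unique positive semidefinite square root of a positive semidefinite matrix
(junk value `0` if `A` is not positive semidefinite). -/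
noncomputable def matSqrt {m : ℕ} (A : Matrix (Fin m) (Fin m) ℝ) : Matrix (Fin m) (Fin m) ℝ :=
  if h : A.PosSemidef then h.1.eigenvectorUnitary.1 *
    diagonal ((RCLike.ofReal : ℝ → ℝ) ∘ (√·) ∘ h.1.eigenvalues) *
    (star h.1.eigenvectorUnitary : Matrix (Fin m) (Fin m) ℝ) else 0

/-- The GradWhitening operator `A ↦ (A Aᵀ)^{-1/2} A`. -/
noncomputable def whiten {m n : ℕ} (A : Matrix (Fin m) (Fin n) ℝ) : Matrix (Fin m) (Fin n) ℝ :=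
  (matSqrt (A * Aᵀ))⁻¹ * A

/-- The Schatten 1-norm (sum of singular values): `‖A‖₁ = Tr((A Aᵀ)^{1/2})`. -/
noncomputable def schattenOne {m n : ℕ} (A : Matrix (Fin m) (Fin n) ℝ) : ℝ :=
  (matSqrt (A * Aᵀ)).trace

/-- The quadratic loss `L(W) = (1/2) * Tr(Wᵀ H W)`. -/
noncomputable def loss {m n : ℕ} (H : Matrix (Fin m) (Fin m) ℝ)
    (W : Matrix (Fin m) (Fin n) ℝ) : ℝ :=
  (1 / 2) * (Wᵀ * H * W).trace

/-! Orthonormal rows of `W⁰` give `(H W⁰)(H W⁰)ᵀ = H²`, whose positive square root is `H`.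
Hence `‖H W⁰‖₁ = Tr H`, so `η* = 1`, and whitening `H W⁰` returns `H⁻¹ H W⁰ = W⁰`. -/

open scoped MatrixOrder

lemma Matrix.mul_mul_transpose_of_mul_transpose_eq_one {R k l p : Type*} [CommSemiring R]
    [Fintype l] [Fintype p] [DecidableEq l] {A : Matrix k l R} {W : Matrix l p R}
    (hW : W * Wᵀ = 1) : (A * W) * (A * W)ᵀ = A * Aᵀ := by
  rw [transpose_mul, Matrix.mul_assoc, ← Matrix.mul_assoc W, hW, Matrix.one_mul]

lemma matSqrt_eq_cfcSqrt {m : ℕ} {A : Matrix (Fin m) (Fin m) ℝ} (hA : A.PosSemidef) :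
    matSqrt A = CFC.sqrt A := by
  rw [matSqrt, dif_pos hA, CFC.sqrt_eq_real_sqrt A hA.nonneg, cfcₙ_eq_cfc,
    hA.1.cfc_eq, IsHermitian.cfc, Unitary.conjStarAlgAut_apply]

lemma matSqrt_mul_self {m : ℕ} {H : Matrix (Fin m) (Fin m) ℝ} (hH : H.PosSemidef) :
    matSqrt (H * H) = H := by
  rw [← sq, matSqrt_eq_cfcSqrt (hH.pow 2), CFC.sqrt_sq H hH.nonneg]

lemma matSqrt_mul_mul_transpose_of_mul_transpose_eq_one {m n : ℕ}
    {H : Matrix (Fin m) (Fin m) ℝ} (hH : H.PosSemidef) {W : Matrix (Fin m) (Fin n) ℝ}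
    (hW : W * Wᵀ = 1) : matSqrt ((H * W) * (H * W)ᵀ) = H := by
  rw [mul_mul_transpose_of_mul_transpose_eq_one hW,
    ← conjTranspose_eq_transpose_of_trivial, hH.1.eq, matSqrt_mul_self hH]

lemma schattenOne_mul_of_mul_transpose_eq_one {m n : ℕ}
    {H : Matrix (Fin m) (Fin m) ℝ} (hH : H.PosSemidef) {W : Matrix (Fin m) (Fin n) ℝ}
    (hW : W * Wᵀ = 1) : schattenOne (H * W) = H.trace := by
  rw [schattenOne, matSqrt_mul_mul_transpose_of_mul_transpose_eq_one hH hW]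

lemma whiten_mul_of_mul_transpose_eq_one {m n : ℕ}
    {H : Matrix (Fin m) (Fin m) ℝ} (hH : H.PosDef) {W : Matrix (Fin m) (Fin n) ℝ}
    (hW : W * Wᵀ = 1) : whiten (H * W) = W := by
  rw [whiten, matSqrt_mul_mul_transpose_of_mul_transpose_eq_one hH.posSemidef hW,
    ← Matrix.mul_assoc, nonsing_inv_mul _ (hH.isUnit.map detMonoidHom), Matrix.one_mul]

theorem whitened_step_one_step_convergence_stiefel_general {m n : ℕ}
    (H : Matrix (Fin m) (Fin m) ℝ) (hH : H.PosDef)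
    (W0 : Matrix (Fin m) (Fin n) ℝ) (hW0 : W0 * W0ᵀ = 1) :
    W0 - (schattenOne (H * W0) / H.trace) • whiten (H * W0) = 0 := by
  cases isEmpty_or_nonempty (Fin m)
  · -- `Tr H = 0` makes `η*` junk here, but all matrices with no rows vanish.
    exact Subsingleton.elim _ _
  rw [schattenOne_mul_of_mul_transpose_eq_one hH.posSemidef hW0,
    whiten_mul_of_mul_transpose_eq_one hH hW0, div_self hH.trace_pos.ne', one_smul, sub_self]

/-- From an initialization `W⁰` with orthonormal rows (Stiefel manifold), one whitened
gradient step with the optimal step size `η* = ‖H W⁰‖₁ / Tr(H)` reaches the global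
minimizer `W* = 0` of the quadratic loss. -/
theorem whitened_step_one_step_convergence_stiefel {m n : ℕ} (hmn : m ≤ n)
    (H : Matrix (Fin m) (Fin m) ℝ) (hH : H.PosDef)
    (W0 : Matrix (Fin m) (Fin n) ℝ) (hW0 : W0 * W0ᵀ = 1) :
    W0 - (schattenOne (H * W0) / H.trace) • whiten (H * W0) = 0 :=
  whitened_step_one_step_convergence_stiefel_general H hH W0 hW0
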